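/- Let H be a Hilbert space, S : H → H a linear isometry, and E, O two orthogonal projections (multiplication by indicator functions in the application). If the operator P = O ∘ S ∘ E satisfies ‖P‖ < 1, then with C₀ = 1 - ‖P‖, for every f ∈ H one has ‖f‖ ≤ C₀⁻¹ ‖(I - O) S f‖ + (C₀⁻¹ + 1) ‖(I - E) f‖; consequently ‖f‖² ≤ 2(C₀⁻¹+1)² ( ‖(I-E)f‖² + ‖(I-O)Sf‖² ). -/

import Mathlib

/-!
Split `f = E f + (f - E f)`. On the range of `E` the operator `P` agrees with `O ∘ S`, so
`‖O (S (E f))‖ ≤ ‖P‖ ‖E f‖`, and since `S` preserves norms, `(I - O) S` loses at most a factor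
`1 - ‖P‖` on `E f`. As `(I - O) S` is a contraction, passing from `E f` back to `f` costs at
most `‖f - E f‖`; the quadratic bound follows from `(a + b)² ≤ 2 (a² + b²)`.
-/

section

variable {𝕜 V W : Type*} [RCLike 𝕜]

theorem IsStarProjection.norm_sub_apply_le [NormedAddCommGroup W] [InnerProductSpace 𝕜 W]
    [CompleteSpace W] {O : W →L[𝕜] W} (hO : IsStarProjection O) (x : W) :
    ‖x - O x‖ ≤ ‖x‖ := by
  simpa using (1 - O).le_of_opNorm_le (hO.one_sub.norm_le _) x

theorem one_sub_opNorm_mul_norm_le_of_apply_eq [SeminormedAddCommGroup V]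
    [SeminormedAddCommGroup W] [NormedSpace 𝕜 V] [NormedSpace 𝕜 W] (S : V →ₗᵢ[𝕜] W)
    (E : V →L[𝕜] V) (O : W →L[𝕜] W) {P : V →L[𝕜] W} (hP : ∀ f, P f = O (S (E f))) {g : V}
    (hg : E g = g) :
    (1 - ‖P‖) * ‖g‖ ≤ ‖S g - O (S g)‖ := by
  have hOSg : ‖O (S g)‖ ≤ ‖P‖ * ‖g‖ := by
    simpa only [hP, hg] using P.le_opNorm g
  have hrev : ‖g‖ - ‖O (S g)‖ ≤ ‖S g - O (S g)‖ := S.norm_map g ▸ norm_sub_norm_le _ _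
  linarith

section StarProjection

variable [SeminormedAddCommGroup V] [NormedSpace 𝕜 V] [NormedAddCommGroup W]
  [InnerProductSpace 𝕜 W] [CompleteSpace W]

theorem IsStarProjection.norm_sub_apply_isometry_le_add {O : W →L[𝕜] W}
    (hO : IsStarProjection O) (S : V →ₗᵢ[𝕜] W) (f g : V) :
    ‖S g - O (S g)‖ ≤ ‖S f - O (S f)‖ + ‖f - g‖ := by
  calc ‖S g - O (S g)‖ = ‖(S f - O (S f)) - (S (f - g) - O (S (f - g)))‖ := by
        simp only [map_sub]; abel
    _ ≤ ‖S f - O (S f)‖ + ‖S (f - g) - O (S (f - g))‖ := norm_sub_le _ _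
    _ ≤ ‖S f - O (S f)‖ + ‖f - g‖ := by
        gcongr
        simpa only [S.norm_map] using hO.norm_sub_apply_le (S (f - g))

theorem norm_le_inv_one_sub_opNorm_mul_add (S : V →ₗᵢ[𝕜] W) {E : V →L[𝕜] V}
    {O : W →L[𝕜] W} {P : V →L[𝕜] W} (hE : IsIdempotentElem E) (hO : IsStarProjection O)
    (hP : ∀ f, P f = O (S (E f))) (hPnorm : ‖P‖ < 1) (f : V) :
    ‖f‖ ≤ (1 - ‖P‖)⁻¹ * ‖S f - O (S f)‖ + ((1 - ‖P‖)⁻¹ + 1) * ‖f - E f‖ := by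
  have hC : 0 < 1 - ‖P‖ := sub_pos.mpr hPnorm
  have hEf : (1 - ‖P‖) * ‖E f‖ ≤ ‖S f - O (S f)‖ + ‖f - E f‖ :=
    (one_sub_opNorm_mul_norm_le_of_apply_eq S E O hP (congr($hE f))).trans
      (hO.norm_sub_apply_isometry_le_add S f (E f))
  calc ‖f‖ ≤ ‖E f‖ + ‖f - E f‖ := norm_le_norm_add_norm_sub' f (E f)
    _ ≤ (1 - ‖P‖)⁻¹ * (‖S f - O (S f)‖ + ‖f - E f‖) + ‖f - E f‖ := by
        gcongr
        rwa [le_inv_mul_iff₀ hC]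
    _ = (1 - ‖P‖)⁻¹ * ‖S f - O (S f)‖ + ((1 - ‖P‖)⁻¹ + 1) * ‖f - E f‖ := by ring

end StarProjection

theorem sq_le_two_mul_sq_mul_add_sq {x a b p q : ℝ} (hx : 0 ≤ x) (hb : 0 ≤ b) (hpq : p ≤ q)
    (h : x ≤ p * b + q * a) : x ^ 2 ≤ 2 * q ^ 2 * (a ^ 2 + b ^ 2) := by
  have hq : x ≤ q * (a + b) := by
    nlinarith [mul_le_mul_of_nonneg_right hpq hb]
  calc x ^ 2 ≤ (q * (a + b)) ^ 2 := pow_le_pow_left₀ hx hq 2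
    _ = q ^ 2 * (a + b) ^ 2 := mul_pow _ _ _
    _ ≤ q ^ 2 * (2 * (a ^ 2 + b ^ 2)) := by gcongr; exact add_sq_le
    _ = 2 * q ^ 2 * (a ^ 2 + b ^ 2) := by ring

end

theorem norm_bound_of_projection_composition_norm_lt_one_general
    {H : Type*} [NormedAddCommGroup H] [InnerProductSpace ℂ H] [CompleteSpace H]
    (S : H →ₗᵢ[ℂ] H) (E O : H →L[ℂ] H)
    (hEproj : IsIdempotentElem E) (hOproj : IsIdempotentElem O)
    (hOsa : IsSelfAdjoint O)
    (P : H →L[ℂ] H)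
    (hP : ∀ f : H, P f = O (S (E f)))
    (hPnorm : ‖P‖ < 1) :
    ∀ f : H,
      ‖f‖ ≤ (1 - ‖P‖)⁻¹ * ‖S f - O (S f)‖ + ((1 - ‖P‖)⁻¹ + 1) * ‖f - E f‖ ∧
      ‖f‖ ^ 2 ≤ 2 * ((1 - ‖P‖)⁻¹ + 1) ^ 2 * (‖f - E f‖ ^ 2 + ‖S f - O (S f)‖ ^ 2) := by
  intro f
  have hbound :=
    norm_le_inv_one_sub_opNorm_mul_add S hEproj ⟨hOproj, hOsa⟩ hP hPnorm f
  exact ⟨hbound, sq_le_two_mul_sq_mul_add_sq (norm_nonneg f) (norm_nonneg _)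
    (le_add_of_nonneg_right zero_le_one) hbound⟩

/-- Let `H` be a Hilbert space, `S` a linear isometry of `H` and `E, O`
orthogonal projections. If `P = O ∘ S ∘ E` has `‖P‖ < 1`, then with `C₀ = 1 - ‖P‖`,
for every `f ∈ H`:
`‖f‖ ≤ C₀⁻¹ ‖(I - O) S f‖ + (C₀⁻¹ + 1) ‖(I - E) f‖`, and consequently
`‖f‖² ≤ 2 (C₀⁻¹ + 1)² (‖(I - E) f‖² + ‖(I - O) S f‖²)`. -/
theorem norm_bound_of_projection_composition_norm_lt_one
    {H : Type*} [NormedAddCommGroup H] [InnerProductSpace ℂ H] [CompleteSpace H]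
    (S : H →ₗᵢ[ℂ] H) (E O : H →L[ℂ] H)
    (hEproj : IsIdempotentElem E) (hOproj : IsIdempotentElem O)
    (hEsa : IsSelfAdjoint E) (hOsa : IsSelfAdjoint O)
    (P : H →L[ℂ] H)
    (hP : ∀ f : H, P f = O (S (E f)))
    (hPnorm : ‖P‖ < 1) :
    ∀ f : H,
      ‖f‖ ≤ (1 - ‖P‖)⁻¹ * ‖S f - O (S f)‖ + ((1 - ‖P‖)⁻¹ + 1) * ‖f - E f‖ ∧
      ‖f‖ ^ 2 ≤ 2 * ((1 - ‖P‖)⁻¹ + 1) ^ 2 * (‖f - E f‖ ^ 2 + ‖S f - O (S f)‖ ^ 2) :=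
  norm_bound_of_projection_composition_norm_lt_one_general S E O hEproj hOproj hOsa P hP hPnorm
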